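/- Let X̃ be a real n×m matrix with n ≥ 1, let λ > 0, let s₁,…,s_m be the eigenvalues of X̃ᵀX̃ (counted with multiplicity), and let s̄ := tr(X̃ᵀX̃)/(n·m) be the mean of the eigenvalues of X̃ᵀX̃/n. Then the effective dimension ρ := Σ_{i=1}^m s_i/(s_i + λ) satisfies ρ ≤ m·s̄/(s̄ + λ/n). -/

import Mathlib

/-!
The map `x ↦ x / (x + λ)` is concave on `[0, ∞)` for `λ ≥ 0`, being `1 - λ (x + λ)⁻¹`. The
eigenvalues of `X̃ᵀX̃` are nonnegative and sum to its trace, so Jensen's inequality bounds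
`ρ = ∑ i, s i / (s i + λ)` by `m` times the value of that map at the mean eigenvalue
`tr(X̃ᵀX̃) / m = n s̄`; the factor `n` cancels in `n s̄ / (n s̄ + λ) = s̄ / (s̄ + λ / n)`.
-/

open Matrix Set Finset

theorem concaveOn_div_add_const {c : ℝ} (hc : 0 ≤ c) :
    ConcaveOn ℝ (Ioi (-c)) fun x => x / (x + c) := by
  have hinv : ConvexOn ℝ (Ioi (-c)) fun x => (x + c)⁻¹ := by
    simpa [Function.comp_def, preimage_const_add_Ioi] using
      (convexOn_zpow (𝕜 := ℝ) (-1)).translate_left c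
  refine ((hinv.smul hc).neg.add_const 1).congr fun x hx => ?_
  have hx : x + c ≠ 0 := by linarith [mem_Ioi.1 hx]
  simp only [Pi.add_apply, Pi.neg_apply, smul_eq_mul]
  field_simp
  ring

theorem ConcaveOn.sum_le_card_mul_map_average {ι : Type*} {s : Set ℝ} {f : ℝ → ℝ}
    (hf : ConcaveOn ℝ s f) (t : Finset ι) {a : ι → ℝ} (ha : ∀ i ∈ t, a i ∈ s) :
    ∑ i ∈ t, f (a i) ≤ #t * f ((∑ i ∈ t, a i) / #t) := by
  rcases t.eq_empty_or_nonempty with rfl | ht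
  · simp
  have hcard : (0 : ℝ) < #t := by exact_mod_cast ht.card_pos
  have hjensen := hf.le_map_sum (t := t) (w := fun _ => (#t : ℝ)⁻¹) (p := a)
    (fun _ _ => inv_nonneg.2 hcard.le) (by simp [hcard.ne']) ha
  simp only [smul_eq_mul, ← Finset.mul_sum] at hjensen
  rw [inv_mul_eq_div, div_le_iff₀ hcard, inv_mul_eq_div] at hjensen
  linarith

/-- Lemma 1 of the paper. Let `X̃` be a real `n × m` matrix with
`n ≥ 1`, let `λ > 0`, let `s i` be the eigenvalues of `X̃ᵀ * X̃` (counted with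
multiplicity), and let `s̄ = tr(X̃ᵀX̃)/(n·m)` be the mean of the eigenvalues of
`X̃ᵀX̃/n`. Then the effective dimension `ρ = ∑ i, s i / (s i + λ)` satisfies
`ρ ≤ m · s̄ / (s̄ + λ/n)`. -/
theorem effective_dimension_le_upper_bound
    (n m : ℕ) (hn : 1 ≤ n) (X : Matrix (Fin n) (Fin m) ℝ) (lam : ℝ) (hlam : 0 < lam)
    (hs : (Xᵀ * X).IsHermitian) :
    (∑ i, hs.eigenvalues i / (hs.eigenvalues i + lam)) ≤
      (m : ℝ) * ((Xᵀ * X).trace / (n * m)) /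
        ((Xᵀ * X).trace / (n * m) + lam / n) := by
  have hpsd : (Xᵀ * X).PosSemidef := by
    simpa using posSemidef_conjTranspose_mul_self X
  have htrace : (Xᵀ * X).trace = ∑ i, hs.eigenvalues i := by
    simpa using hs.trace_eq_sum_eigenvalues
  have hn₀ : (n : ℝ) ≠ 0 := Nat.cast_ne_zero.2 (by omega)
  have hrhs : (Xᵀ * X).trace / (n * m) / ((Xᵀ * X).trace / (n * m) + lam / n) =
      (Xᵀ * X).trace / m / ((Xᵀ * X).trace / m + lam) := by
    rw [mul_comm, ← div_div, ← add_div, div_div_div_cancel_right₀ hn₀]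
  have hjensen := (concaveOn_div_add_const hlam.le).sum_le_card_mul_map_average univ
    (a := hs.eigenvalues) fun i _ => (neg_neg_of_pos hlam).trans_le (hpsd.eigenvalues_nonneg i)
  rw [card_univ, Fintype.card_fin] at hjensen
  rw [mul_div_assoc, hrhs, htrace]
  exact hjensen
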